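/- Minimality of α-sets: Let x ∈ X, σ ∈ S^G_{<∞} with range c, and let α ≥ 1 be a countable ordinal. Then for every V^G_c-invariant set A ∈ Σ⁰_α(X) ∪ Π⁰_α(X): V^G_σ·x ⊆ A if and only if B_α(x,σ) ⊆ A. -/

import Mathlib

open Set Pointwise

noncomputable section

/-- `S_∞`, the group of all permutations of `ℕ`. -/
abbrev Sinf : Type := Equiv.Perm ℕ

/-- The topology of pointwise convergence on `S_∞`. -/
instance SinfTopology : TopologicalSpace Sinf :=
  TopologicalSpace.induced (fun g : Sinf => (g : ℕ → ℕ)) Pi.topologicalSpace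

/-- The graph of the restriction of a permutation `g` to a finite set `d`. -/
def restr (g : Sinf) (d : Finset ℕ) : Set (ℕ × ℕ) := {p | p.1 ∈ d ∧ g p.1 = p.2}

/-- The domain of a partial map coded by its graph. -/
def pdom (σ : Set (ℕ × ℕ)) : Set ℕ := Prod.fst '' σ

/-- The range of a partial map coded by its graph. -/
def prng (σ : Set (ℕ × ℕ)) : Set ℕ := Prod.snd '' σ

/-- `S^G_{<∞}`: graphs of restrictions of elements of `G` to finite subsets of `ℕ`. -/
def SGfin (G : Subgroup Sinf) : Set (Set (ℕ × ℕ)) :=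
  {σ | ∃ g ∈ G, ∃ d : Finset ℕ, σ = restr g d}

/-- `V^G_σ`: the elements of `G` extending the partial bijection `σ`. -/
def Vb (G : Subgroup Sinf) (σ : Set (ℕ × ℕ)) : Set G :=
  {g : G | ∀ p ∈ σ, (g : Sinf) p.1 = p.2}

/-- `V^G_c`: the pointwise stabilizer of `c ⊆ ℕ` in `G`. -/
def Vc (G : Subgroup Sinf) (c : Set ℕ) : Set G :=
  {g : G | ∀ k ∈ c, (g : Sinf) k = k}

/-- The identity partial bijection on `c`. -/
def idb (c : Set ℕ) : Set (ℕ × ℕ) := {p | p.1 ∈ c ∧ p.2 = p.1}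

/-- The composition `σ ∘ f`, restricted to `f⁻¹[dom σ]`. -/
def compR (σ : Set (ℕ × ℕ)) (f : Sinf) : Set (ℕ × ℕ) := {p | (f p.1, p.2) ∈ σ}

/-- The composition `f ∘ σ`. -/
def compL (f : Sinf) (σ : Set (ℕ × ℕ)) : Set (ℕ × ℕ) := {p | (p.1, f⁻¹ p.2) ∈ σ}

/-- The Borel classes `Σ⁰_α(X)`: `Σ⁰_1(X)` consists of the open sets, and for `α > 1`,
`Σ⁰_α(X)` consists of countable unions of sets whose complements lie in
`⋃_{1 ≤ β < α} Σ⁰_β(X)` (i.e. of sets from `⋃_{1 ≤ β < α} Π⁰_β(X)`). -/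
def SigmaB (X : Type*) [TopologicalSpace X] (α : Ordinal.{0}) : Set (Set X) :=
  if α ≤ 1 then {s | IsOpen s}
  else {s | ∃ f : ℕ → Set X,
      (∀ n, ∃ β : {γ : Ordinal.{0} // γ < α}, 1 ≤ β.1 ∧ (f n)ᶜ ∈ SigmaB X β.1) ∧
      s = ⋃ n, f n}
termination_by α
decreasing_by exact β.2

/-- The Borel classes `Π⁰_α(X)`: complements of sets in `Σ⁰_α(X)`. -/
def PiB (X : Type*) [TopologicalSpace X] (α : Ordinal.{0}) : Set (Set X) :=
  {s | sᶜ ∈ SigmaB X α}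

section Action

variable (G : Subgroup Sinf) {X : Type*} [TopologicalSpace X] [MulAction G X]

/-- The image `S • x` of a point under a set of group elements. -/
def setOrb (S : Set G) (x : X) : Set X := (fun g : G => g • x) '' S

/-- The image `S • B` of a set under a set of group elements. -/
def setSmul (S : Set G) (B : Set X) : Set X := ⋃ g ∈ S, g • B

/-- The `1`-sets `B₁(x, σ)`. -/
def BsetOne (A : ℕ → Set X) (σ : Set (ℕ × ℕ)) (x : X) : Set X :=
  (⋂ l, ⋂ (_ : (setOrb G (Vb G σ) x ∩ A l).Nonempty), setSmul G (Vc G (prng σ)) (A l)) ∩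
    (⋂ l, ⋂ (_ : setOrb G (Vb G σ) x ∩ A l = ∅), (setSmul G (Vc G (prng σ)) (A l))ᶜ)

/-- The successor step of the recursion defining the `α`-sets. -/
def BsetSucc (prev : Set (ℕ × ℕ) → X → Set X) (σ : Set (ℕ × ℕ)) (x : X) : Set X :=
  (⋂ b : Finset ℕ, ⋂ (_ : pdom σ ⊆ ↑b),
      ⋃ σ' ∈ SGfin G, ⋃ (_ : σ ⊆ σ') (_ : pdom σ' = ↑b), prev σ' x) ∩
    (⋂ a : Finset ℕ, ⋂ (_ : prng σ ⊆ ↑a),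
      ⋃ σ' ∈ SGfin G, ⋃ (_ : σ ⊆ σ') (_ : prng σ' = ↑a), prev σ' x)

/-- The `α`-sets `B_α(x, σ)`, for `α ≥ 1` (the value at `α = 0` is junk). -/
def Bset (A : ℕ → Set X) (α : Ordinal.{0}) : Set (ℕ × ℕ) → X → Set X :=
  @Ordinal.limitRecOn (fun _ => Set (ℕ × ℕ) → X → Set X) α
    (fun _ _ => univ)
    (fun o ih => if o = 0 then BsetOne G A else BsetSucc G ih)
    (fun o _ ih σ x => ⋂ β : Ordinal.{0}, ⋂ (hβ : β < o), ⋂ (_ : 1 ≤ β), ih β hβ σ x)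

/-- The family `𝓑^x_{<α}` consisting of the basic open sets together with all
`β`-sets of `x` for `1 ≤ β < α`. -/
def BltFam (A : ℕ → Set X) (x : X) (α : Ordinal.{0}) : Set (Set X) :=
  {B | (∃ l, B = A l) ∨
    ∃ β : Ordinal.{0}, 1 ≤ β ∧ β < α ∧ ∃ σ ∈ SGfin G, B = Bset G A β σ x}

/-- `γ^G_*(x)`: the least countable ordinal `γ` such that for all `σ, δ ∈ S^G_{<∞}`
with equal ranges, if `B_α(x,σ) ≠ B_α(x,δ)` for some countable ordinal `α ≥ 1`,
then already `B_γ(x,σ) ≠ B_γ(x,δ)`. -/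
def gammaStar (A : ℕ → Set X) (x : X) : Ordinal :=
  sInf {γ : Ordinal.{0} | γ.card ≤ Cardinal.aleph0 ∧
    ∀ σ ∈ SGfin G, ∀ δ ∈ SGfin G, prng σ = prng δ →
      (∃ α : Ordinal.{0}, 1 ≤ α ∧ α.card ≤ Cardinal.aleph0 ∧
        Bset G A α σ x ≠ Bset G A α δ x) →
      Bset G A γ σ x ≠ Bset G A γ δ x}

end Action

/-- The topology on a subset `S ⊆ X` generated by the traces on `S` of the members
of the family `F`. -/
def traceTop {X : Type*} (S : Set X) (F : Set (Set X)) : TopologicalSpace S :=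
  TopologicalSpace.generateFrom {u : Set S | ∃ B ∈ F, u = Subtype.val ⁻¹' B}

/-- The space of closed subsets of `Y`. -/
def EffrosSpace (Y : Type*) [TopologicalSpace Y] := {K : Set Y // IsClosed K}

/-- The Effros Borel structure on the space of closed subsets of `Y`. -/
def effrosSigma (Y : Type*) [TopologicalSpace Y] : MeasurableSpace (EffrosSpace Y) :=
  MeasurableSpace.generateFrom
    {S | ∃ U : Set Y, IsOpen U ∧ S = {K : EffrosSpace Y | (K.1 ∩ U).Nonempty}}

/-!
Write `D^{Δτ}` (resp. `D^{*τ}`) for the set of points `y` such that `h • y ∈ D` for non-meagre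
(resp. comeagre) many `h ∈ V_τ`. For `τ` the identity on `c = rng σ` both transforms fix every
`V_c`-invariant set, so it suffices to show by induction on `α`, for all `σ` and all `τ` with
`dom τ ⊆ rng σ`, that `V_σ·x ⊆ D^{Δτ}` implies `B_α(x,σ) ⊆ D^{Δτ}` for `D ∈ Σ⁰_α`, and the same
with `D^{*τ}` for `D ∈ Π⁰_α`. For `α = 1`, `D^{Δτ}` is open for open `D`, `D^{*τ}` is closed for
closed `D`, and `B₁` is cut out by the basic open sets. In the successor step `D` is a countable
union (or intersection) of sets of lower rank; since `G` is Polish, a non-meagre Baire measurable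
subset of `V_τ` is comeagre in some `V_{τ₁}`, and the two halves of the definition of `B_{β+1}`
provide an extension of `σ` with the required domain or range, to which the induction hypothesis
applies. The converse holds since `V_σ·x ⊆ B_α(x,σ)`.
-/

namespace Sinf

open Topology

lemma continuous_comp_nat :
    Continuous fun p : (ℕ → ℕ) × (ℕ → ℕ) => p.1 ∘ p.2 := by
  have heval : Continuous fun q : (ℕ → ℕ) × ℕ => q.1 q.2 :=
    continuous_prod_of_discrete_right.2 fun k => continuous_apply k
  exact continuous_pi fun k =>
    heval.comp (continuous_fst.prodMk ((continuous_apply k).comp continuous_snd))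

lemma isInducing_coe : IsInducing fun g : Sinf => (g : ℕ → ℕ) := ⟨rfl⟩

instance : IsTopologicalGroup Sinf where
  continuous_mul := isInducing_coe.continuous_iff.2 <|
    continuous_comp_nat.comp (isInducing_coe.continuous.prodMap isInducing_coe.continuous)
  continuous_inv := isInducing_coe.continuous_iff.2 <| continuous_pi fun k =>
    continuous_discrete_rng.2 fun m => by
      convert ((continuous_apply m).comp isInducing_coe.continuous).isOpen_preimage {k}
        (isOpen_discrete _) using 1
      ext g
      exact (Equiv.symm_apply_eq g).trans eq_comm

lemma isClosedEmbedding_coe_coe_inv :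
    IsClosedEmbedding fun g : Sinf => ((g : ℕ → ℕ), ((g⁻¹ : Sinf) : ℕ → ℕ)) := by
  have hcont : Continuous fun g : Sinf => ((g : ℕ → ℕ), ((g⁻¹ : Sinf) : ℕ → ℕ)) :=
    isInducing_coe.continuous.prodMk (isInducing_coe.continuous.comp continuous_inv)
  refine ⟨⟨.of_comp hcont continuous_fst isInducing_coe,
    fun g h hgh => Equiv.coe_fn_injective (congrArg Prod.fst hgh)⟩, ?_⟩
  have hrange : Set.range (fun g : Sinf => ((g : ℕ → ℕ), ((g⁻¹ : Sinf) : ℕ → ℕ))) =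
      {p | p.1 ∘ p.2 = id} ∩ {p | p.2 ∘ p.1 = id} := by
    ext ⟨f, f'⟩
    refine ⟨?_, fun ⟨h₁, h₂⟩ => ⟨⟨f, f', congrFun h₂, congrFun h₁⟩, rfl⟩⟩
    rintro ⟨g, hg⟩
    simp only [Prod.mk.injEq] at hg
    obtain ⟨rfl, rfl⟩ := hg
    exact ⟨funext g.apply_symm_apply, funext g.symm_apply_apply⟩
  rw [hrange]
  exact (isClosed_eq continuous_comp_nat continuous_const).inter
    (isClosed_eq (continuous_comp_nat.comp continuous_swap) continuous_const)

instance : PolishSpace Sinf := isClosedEmbedding_coe_coe_inv.polishSpace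

end Sinf

lemma baireSpace_of_isClosed {G : Subgroup Sinf} (hG : IsClosed (G : Set Sinf)) : BaireSpace G :=
  haveI := hG.polishSpace
  inferInstance

section PartialMaps

variable {G : Subgroup Sinf} {σ σ' τ ρ : Set (ℕ × ℕ)}

lemma restr_mem_SGfin (g : G) (d : Finset ℕ) : restr g d ∈ SGfin G := ⟨g, g.2, d, rfl⟩

lemma pdom_restr (g : Sinf) (d : Finset ℕ) : pdom (restr g d) = d := by
  ext k
  simp [pdom, restr]

lemma prng_restr (g : Sinf) (d : Finset ℕ) : prng (restr g d) = g '' d := by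
  ext m
  constructor
  · rintro ⟨p, ⟨hk, hp⟩, rfl⟩
    exact ⟨p.1, hk, hp⟩
  · rintro ⟨k, hk, rfl⟩
    exact ⟨(k, g k), ⟨hk, rfl⟩, rfl⟩

lemma pdom_finite (hσ : σ ∈ SGfin G) : (pdom σ).Finite := by
  obtain ⟨g, -, d, rfl⟩ := hσ
  simp [pdom_restr]

lemma prng_finite (hσ : σ ∈ SGfin G) : (prng σ).Finite := by
  obtain ⟨g, -, d, rfl⟩ := hσ
  simpa [prng_restr] using d.finite_toSet.image g

lemma eq_of_mem_SGfin (hσ : σ ∈ SGfin G) {k m m' : ℕ} (h : (k, m) ∈ σ) (h' : (k, m') ∈ σ) :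
    m = m' := by
  obtain ⟨g, -, d, rfl⟩ := hσ
  exact h.2.symm.trans h'.2

lemma eq_of_subset_of_pdom_subset (hσ' : σ' ∈ SGfin G) (h : σ ⊆ σ') (hdom : pdom σ' ⊆ pdom σ) :
    σ' = σ := by
  refine (Set.Subset.antisymm ?_ h)
  rintro ⟨k, m⟩ hkm
  obtain ⟨⟨k, m'⟩, hkm', rfl⟩ := hdom ⟨_, hkm, rfl⟩
  rwa [eq_of_mem_SGfin hσ' hkm (h hkm')]

lemma idb_mem_SGfin {c : Set ℕ} (hc : c.Finite) : idb c ∈ SGfin G :=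
  ⟨1, G.one_mem, hc.toFinset, by ext; simp [idb, restr, eq_comm]⟩

lemma pdom_idb (c : Set ℕ) : pdom (idb c) = c := by
  ext k
  simp [pdom, idb]

lemma Vb_idb (c : Set ℕ) : Vb G (idb c) = Vc G c := by
  ext g
  simp [Vb, Vc, idb]

lemma compR_compR (f g : Sinf) : compR (compR ρ f) g = compR ρ (f * g) := rfl

lemma compR_mono (h : τ ⊆ ρ) (f : Sinf) : compR τ f ⊆ compR ρ f := fun _ hp => h hp

lemma compR_mem_SGfin (hρ : ρ ∈ SGfin G) {f : Sinf} (hf : f ∈ G) : compR ρ f ∈ SGfin G := by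
  obtain ⟨w, hw, d, rfl⟩ := hρ
  refine ⟨w * f, G.mul_mem hw hf, d.map f.symm.toEmbedding, ?_⟩
  ext p
  simp [compR, restr]

lemma compR_eq_self_of_mem_Vc {c : Set ℕ} {v : G} (hv : v ∈ Vc G c) (hρ : pdom ρ ⊆ c) :
    compR ρ v = ρ := by
  ext ⟨k, m⟩
  change ((v : Sinf) k, m) ∈ ρ ↔ (k, m) ∈ ρ
  constructor
  · intro h
    rwa [(v : Sinf).injective (hv _ (hρ ⟨_, h, rfl⟩))] at h
  · intro h
    rwa [hv k (hρ ⟨_, h, rfl⟩)]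

lemma Vb_anti (h : σ ⊆ σ') : Vb G σ' ⊆ Vb G σ := fun _ hg p hp => hg p (h hp)

lemma mem_Vb_restr {g : G} {w : Sinf} {d : Finset ℕ} :
    g ∈ Vb G (restr w d) ↔ ∀ k ∈ d, (g : Sinf) k = w k :=
  ⟨fun hg k hk => hg (k, w k) ⟨hk, rfl⟩, fun hg _ hp => hp.2 ▸ hg _ hp.1⟩

lemma self_mem_Vb_restr (g : G) (d : Finset ℕ) : g ∈ Vb G (restr g d) := fun _ hp => hp.2

lemma Vb_nonempty (hσ : σ ∈ SGfin G) : (Vb G σ).Nonempty := by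
  obtain ⟨g, hg, d, rfl⟩ := hσ
  exact ⟨⟨g, hg⟩, self_mem_Vb_restr ⟨g, hg⟩ d⟩

lemma isOpen_Vb (hσ : σ ∈ SGfin G) : IsOpen (Vb G σ) := by
  obtain ⟨w, -, d, rfl⟩ := hσ
  have hVb : Vb G (restr w d) = ⋂ k ∈ d, {g : G | (g : Sinf) k = w k} := by
    ext g
    simp [mem_Vb_restr]
  rw [hVb]
  exact isOpen_biInter_finset fun k _ => (isOpen_discrete {w k}).preimage <|
    (continuous_apply k).comp (Sinf.isInducing_coe.continuous.comp continuous_subtype_val)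

lemma exists_Vb_restr_subset {U : Set G} (hU : IsOpen U) {g : G} (hg : g ∈ U) :
    ∃ d : Finset ℕ, Vb G (restr g d) ⊆ U := by
  obtain ⟨W, hW, rfl⟩ :=
    (Sinf.isInducing_coe.comp Topology.IsInducing.subtypeVal).isOpen_iff.1 hU
  obtain ⟨d, u, hu, hdu⟩ := isOpen_pi_iff.1 hW _ hg
  refine ⟨d, fun h hh => hdu fun k hk => ?_⟩
  simpa [mem_Vb_restr.1 hh k hk] using (hu k hk).2

lemma subset_restr_of_mem_Vb {g : G} (hg : g ∈ Vb G σ) {d : Finset ℕ} (hd : pdom σ ⊆ d) :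
    σ ⊆ restr g d :=
  fun p hp => ⟨hd ⟨p, hp, rfl⟩, hg p hp⟩

lemma inv_mem_Vc {c : Set ℕ} {v : G} (hv : v ∈ Vc G c) : v⁻¹ ∈ Vc G c :=
  fun k hk => (Equiv.Perm.inv_eq_iff_eq).2 (hv k hk).symm

lemma inv_mul_mem_Vc_pdom {g h : G} (hg : g ∈ Vb G σ) (hh : h ∈ Vb G σ) :
    g⁻¹ * h ∈ Vc G (pdom σ) := by
  rintro _ ⟨p, hp, rfl⟩
  exact (Equiv.Perm.inv_eq_iff_eq).2 ((hh p hp).trans (hg p hp).symm)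

lemma mul_inv_mem_Vc_prng {g h : G} (hg : g ∈ Vb G σ) (hh : h ∈ Vb G σ) :
    g * h⁻¹ ∈ Vc G (prng σ) := by
  rintro _ ⟨p, hp, rfl⟩
  change (g : Sinf) ((h : Sinf)⁻¹ p.2) = p.2
  rw [(Equiv.Perm.inv_eq_iff_eq).2 (hh p hp).symm, hg p hp]

lemma mul_mem_Vb_of_mem_Vc {v g : G} (hv : v ∈ Vc G (prng σ)) (hg : g ∈ Vb G σ) :
    v * g ∈ Vb G σ := by
  intro p hp
  change (v : Sinf) ((g : Sinf) p.1) = p.2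
  rw [hg p hp, hv _ ⟨p, hp, rfl⟩]

lemma preimage_mul_right_Vb_compR (g : G) :
    (· * g) ⁻¹' Vb G (compR τ g) = Vb G τ := by
  ext h
  refine ⟨fun hh p hp => ?_, fun hh p hp => hh _ hp⟩
  simpa using hh ((g : Sinf)⁻¹ p.1, p.2) (by simpa [compR] using hp)

lemma pdom_compR_inv_subset_prng {g : G} (hg : g ∈ Vb G σ) (hρ : pdom ρ ⊆ pdom σ) :
    pdom (compR ρ ((g⁻¹ : G) : Sinf)) ⊆ prng σ := by
  rintro _ ⟨p, hp, rfl⟩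
  obtain ⟨q, hq, hqp⟩ := hρ ⟨_, hp, rfl⟩
  refine ⟨q, hq, ?_⟩
  rw [← hg q hq, hqp]
  simp

lemma subset_compR_inv (hpr : pdom τ ⊆ prng σ) {g₀ g : G} (hg₀ : g₀ ∈ Vb G σ)
    (hg : g ∈ Vb G σ) (hρ : compR τ g₀ ⊆ ρ) : τ ⊆ compR ρ ((g⁻¹ : G) : Sinf) := by
  rintro ⟨k, m⟩ hkm
  obtain ⟨⟨j, k⟩, hjk, rfl⟩ := hpr ⟨_, hkm, rfl⟩
  have hj : ((g⁻¹ : G) : Sinf) k = j := (Equiv.Perm.inv_eq_iff_eq).2 (hg _ hjk).symm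
  change (((g⁻¹ : G) : Sinf) k, m) ∈ ρ
  rw [hj]
  exact hρ (show ((g₀ : Sinf) j, m) ∈ τ by rwa [hg₀ _ hjk])

end PartialMaps

section Borel

variable {X : Type*} [TopologicalSpace X]

lemma SigmaB_of_le_one {α : Ordinal.{0}} (hα : α ≤ 1) : SigmaB X α = {s | IsOpen s} := by
  rw [SigmaB, if_pos hα]

lemma mem_SigmaB_of_one_lt {α : Ordinal.{0}} (hα : 1 < α) {s : Set X} :
    s ∈ SigmaB X α ↔ ∃ f : ℕ → Set X,
      (∀ n, ∃ β : {γ : Ordinal.{0} // γ < α}, 1 ≤ β.1 ∧ (f n)ᶜ ∈ SigmaB X β.1) ∧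
      s = ⋃ n, f n := by
  rw [SigmaB, if_neg hα.not_ge]
  rfl

lemma baireMeasurableSet_preimage_of_mem_SigmaB {Y : Type*} [TopologicalSpace Y] {f : Y → X}
    (hf : Continuous f) (α : Ordinal.{0}) : ∀ D ∈ SigmaB X α, BaireMeasurableSet (f ⁻¹' D) := by
  induction α using WellFoundedLT.induction with
  | _ α ih =>
    intro D hD
    rcases le_or_gt α 1 with hα | hα
    · rw [SigmaB_of_le_one hα] at hD
      exact (hD.preimage hf).baireMeasurableSet
    · obtain ⟨s, hs, rfl⟩ := (mem_SigmaB_of_one_lt hα).1 hD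
      rw [Set.preimage_iUnion]
      refine .iUnion fun n => ?_
      obtain ⟨β, -, hβ⟩ := hs n
      simpa using (ih β.1 β.2 _ hβ).compl

end Borel

section AlphaSets

variable (G : Subgroup Sinf) {X : Type*} [MulAction G X] (A : ℕ → Set X)
  {σ : Set (ℕ × ℕ)} {x y : X}

lemma Bset_one : Bset G A 1 = BsetOne G A := by
  rw [← zero_add 1, Bset, Ordinal.limitRecOn_add_one, if_pos rfl]

lemma Bset_add_one {o : Ordinal.{0}} (ho : o ≠ 0) :
    Bset G A (o + 1) = BsetSucc G (Bset G A o) := by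
  rw [Bset, Ordinal.limitRecOn_add_one, if_neg ho]
  rfl

lemma Bset_limit {o : Ordinal.{0}} (ho : Order.IsSuccLimit o) (σ : Set (ℕ × ℕ)) (x : X) :
    Bset G A o σ x = ⋂ β : Ordinal.{0}, ⋂ (_ : β < o), ⋂ (_ : 1 ≤ β), Bset G A β σ x := by
  rw [Bset, Ordinal.limitRecOn_limit _ _ _ _ ho]
  rfl

variable {G A}

lemma exists_of_mem_Bset_add_one_pdom {β : Ordinal.{0}} (hβ : β ≠ 0)
    (hy : y ∈ Bset G A (β + 1) σ x) {b : Finset ℕ} (hb : pdom σ ⊆ b) :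
    ∃ σ' ∈ SGfin G, σ ⊆ σ' ∧ pdom σ' = b ∧ y ∈ Bset G A β σ' x := by
  rw [Bset_add_one G A hβ] at hy
  simp only [BsetSucc, Set.mem_inter_iff, Set.mem_iInter, Set.mem_iUnion, exists_prop] at hy
  exact hy.1 b hb

lemma exists_of_mem_Bset_add_one_prng {β : Ordinal.{0}} (hβ : β ≠ 0)
    (hy : y ∈ Bset G A (β + 1) σ x) {a : Finset ℕ} (ha : prng σ ⊆ a) :
    ∃ σ' ∈ SGfin G, σ ⊆ σ' ∧ prng σ' = a ∧ y ∈ Bset G A β σ' x := by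
  rw [Bset_add_one G A hβ] at hy
  simp only [BsetSucc, Set.mem_inter_iff, Set.mem_iInter, Set.mem_iUnion, exists_prop] at hy
  exact hy.2 a ha

lemma Bset_add_one_subset {β : Ordinal.{0}} (hβ : β ≠ 0) (hσ : σ ∈ SGfin G) :
    Bset G A (β + 1) σ x ⊆ Bset G A β σ x := by
  intro y hy
  obtain ⟨b, hb⟩ := (pdom_finite hσ).exists_finset_coe
  obtain ⟨σ', hσ', hσσ', hdom, hy'⟩ := exists_of_mem_Bset_add_one_pdom hβ hy hb.ge
  rwa [eq_of_subset_of_pdom_subset hσ' hσσ' (hdom.trans hb).le] at hy'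

lemma Bset_anti (hσ : σ ∈ SGfin G) (x : X) {β : Ordinal.{0}} (hβ : 1 ≤ β) {α : Ordinal.{0}}
    (hβα : β ≤ α) : Bset G A α σ x ⊆ Bset G A β σ x := by
  induction α using Ordinal.limitRecOn with
  | zero => exact absurd (hβ.trans hβα) (by simp)
  | add_one o ih =>
    rcases hβα.eq_or_lt with rfl | hβα
    · exact subset_rfl
    have hβo := Order.lt_add_one_iff.1 hβα
    exact (Bset_add_one_subset (Order.one_le_iff_ne_zero.1 (hβ.trans hβo)) hσ).trans (ih hβo)
  | limit o hlim ih =>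
    rcases hβα.eq_or_lt with rfl | hβα
    · exact subset_rfl
    rw [Bset_limit G A hlim]
    exact Set.iInter₂_subset_of_subset β hβα (Set.iInter_subset _ hβ)

end AlphaSets

section Orbits

variable {G : Subgroup Sinf} {X : Type*} [MulAction G X] {A : ℕ → Set X} {x : X}

lemma smul_mem_BsetOne {σ : Set (ℕ × ℕ)} {g : G} (hg : g ∈ Vb G σ) :
    g • x ∈ BsetOne G A σ x := by
  refine ⟨Set.mem_iInter₂.2 fun l ⟨_, ⟨h, hh, rfl⟩, hl⟩ => ?_, Set.mem_iInter₂.2 fun l hl => ?_⟩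
  · refine Set.mem_biUnion (mul_inv_mem_Vc_prng hg hh) ?_
    rw [show g • x = (g * h⁻¹) • h • x by rw [smul_smul, inv_mul_cancel_right]]
    exact Set.smul_mem_smul_set hl
  · intro hgx
    obtain ⟨v, hv, hgx⟩ := Set.mem_iUnion₂.1 hgx
    refine Set.eq_empty_iff_forall_notMem.1 hl ((v⁻¹ * g) • x)
      ⟨⟨_, mul_mem_Vb_of_mem_Vc (inv_mem_Vc hv) hg, rfl⟩, ?_⟩
    rw [mul_smul]
    exact Set.mem_smul_set_iff_inv_smul_mem.1 hgx

lemma setOrb_subset_Bset {α : Ordinal.{0}} (hα : 1 ≤ α) (σ : Set (ℕ × ℕ)) :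
    setOrb G (Vb G σ) x ⊆ Bset G A α σ x := by
  induction α using Ordinal.limitRecOn generalizing σ with
  | zero => exact absurd hα (by simp)
  | add_one o ih =>
    rintro _ ⟨g, hg, rfl⟩
    rcases eq_or_ne o 0 with rfl | ho
    · rw [zero_add, Bset_one]
      exact smul_mem_BsetOne hg
    have ih := fun σ' => ih (Order.one_le_iff_ne_zero.2 ho) σ'
    rw [Bset_add_one G A ho]
    simp only [BsetSucc, Set.mem_inter_iff, Set.mem_iInter, Set.mem_iUnion, exists_prop]
    refine ⟨fun b hb => ⟨restr g b, restr_mem_SGfin g b, subset_restr_of_mem_Vb hg hb,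
      pdom_restr _ _, ih _ ⟨g, self_mem_Vb_restr g b, rfl⟩⟩, fun a ha => ?_⟩
    set d := a.map (g : Sinf).symm.toEmbedding
    refine ⟨restr g d, restr_mem_SGfin g d, subset_restr_of_mem_Vb hg ?_, ?_,
      ih _ ⟨g, self_mem_Vb_restr g d, rfl⟩⟩
    · rintro _ ⟨p, hp, rfl⟩
      simpa [d, hg p hp] using ha ⟨p, hp, rfl⟩
    · ext m
      simp [d, prng_restr]
  | limit o hlim ih =>
    rw [Bset_limit G A hlim]
    exact Set.subset_iInter₂ fun β hβ => Set.subset_iInter fun hβ1 => ih β hβ hβ1 σ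

end Orbits

lemma Homeomorph.isMeagre_preimage {α β : Type*} [TopologicalSpace α] [TopologicalSpace β]
    (h : α ≃ₜ β) {s : Set β} : IsMeagre (h ⁻¹' s) ↔ IsMeagre s := by
  rw [IsMeagre, IsMeagre, ← Set.preimage_compl, ← Filter.mem_map, h.residual_map_eq]

section Vaught

open Filter

variable (G : Subgroup Sinf) {X : Type*} [MulAction G X]

/-- The Vaught transform `D^{Δτ}`. -/
def vaughtDelta (τ : Set (ℕ × ℕ)) (D : Set X) : Set X :=
  {y | ¬IsMeagre (Vb G τ ∩ (fun h : G => h • y) ⁻¹' D)}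

/-- The Vaught transform `D^{*τ}`. -/
def vaughtStar (τ : Set (ℕ × ℕ)) (D : Set X) : Set X :=
  {y | IsMeagre (Vb G τ \ (fun h : G => h • y) ⁻¹' D)}

variable {G} {τ τ' : Set (ℕ × ℕ)} {D : Set X} {y : X}

lemma vaughtStar_eq_compl_vaughtDelta_compl (τ : Set (ℕ × ℕ)) (D : Set X) :
    vaughtStar G τ D = (vaughtDelta G τ Dᶜ)ᶜ := by
  ext y
  simp [vaughtStar, vaughtDelta, Set.sdiff_eq]

lemma vaughtDelta_anti (h : τ ⊆ τ') : vaughtDelta G τ' D ⊆ vaughtDelta G τ D :=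
  fun _ hy hm => hy (hm.mono (Set.inter_subset_inter_left _ (Vb_anti h)))

lemma vaughtStar_mono (h : τ ⊆ τ') : vaughtStar G τ D ⊆ vaughtStar G τ' D :=
  fun _ hy => hy.mono (Set.sdiff_subset_sdiff_left (Vb_anti h))

lemma vaughtDelta_iUnion (f : ℕ → Set X) :
    vaughtDelta G τ (⋃ n, f n) = ⋃ n, vaughtDelta G τ (f n) := by
  ext y
  simp only [vaughtDelta, Set.mem_ofPred_eq, Set.mem_iUnion, Set.preimage_iUnion,
    Set.inter_iUnion, ← not_forall, not_iff_not]
  exact ⟨fun h n => h.mono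
    (Set.subset_iUnion (fun i => Vb G τ ∩ (fun h : G => h • y) ⁻¹' f i) n), isMeagre_iUnion⟩

lemma vaughtStar_iInter (f : ℕ → Set X) :
    vaughtStar G τ (⋂ n, f n) = ⋂ n, vaughtStar G τ (f n) := by
  simp only [vaughtStar_eq_compl_vaughtDelta_compl, Set.compl_iInter, vaughtDelta_iUnion,
    Set.compl_iUnion]

lemma smul_mem_vaughtDelta_iff (g : G) :
    g • y ∈ vaughtDelta G τ D ↔ y ∈ vaughtDelta G (compR τ g) D := by
  have hpre : Vb G τ ∩ (fun h : G => h • g • y) ⁻¹' D =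
      Homeomorph.mulRight g ⁻¹' (Vb G (compR τ g) ∩ (fun h : G => h • y) ⁻¹' D) := by
    ext h
    simp [← Set.ext_iff.1 (preimage_mul_right_Vb_compR (τ := τ) g) h, mul_smul]
  simp only [vaughtDelta, Set.mem_ofPred_eq, hpre, Homeomorph.isMeagre_preimage]

lemma smul_mem_vaughtStar_iff (g : G) :
    g • y ∈ vaughtStar G τ D ↔ y ∈ vaughtStar G (compR τ g) D := by
  simp only [vaughtStar_eq_compl_vaughtDelta_compl, Set.mem_compl_iff,
    smul_mem_vaughtDelta_iff]

lemma exists_mem_vaughtStar_of_mem_vaughtDelta (hτ : τ ∈ SGfin G)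
    (hD : BaireMeasurableSet ((fun h : G => h • y) ⁻¹' D)) (hy : y ∈ vaughtDelta G τ D) :
    ∃ τ₁ ∈ SGfin G, τ ⊆ τ₁ ∧ y ∈ vaughtStar G τ₁ D := by
  set S := Vb G τ ∩ (fun h : G => h • y) ⁻¹' D
  -- `S` differs by a meagre set from the open set `u ∩ V_τ`, which contains a basic open `V_{τ₁}`
  obtain ⟨u, hu, hSu⟩ := ((isOpen_Vb hτ).baireMeasurableSet.inter hD).residualEq_isOpen
  have hSu' : S =ᶠ[residual G] (u ∩ Vb G τ : Set G) := by
    have := hSu.inter (EventuallyEq.refl (residual G) (Vb G τ))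
    rwa [Set.inter_eq_left.2 Set.inter_subset_left] at this
  have hmeagre : IsMeagre ((u ∩ Vb G τ) \ S) :=
    eventuallyEq_empty.1 <| (EventuallyEq.rfl.diff hSu').trans <| by
      rw [sdiff_self]
      exact EventuallyEq.rfl
  obtain ⟨g, hg⟩ : (u ∩ Vb G τ).Nonempty := by
    refine Set.nonempty_iff_ne_empty.2 fun h => hy ?_
    rw [h] at hSu'
    exact eventuallyEq_empty.1 hSu'
  obtain ⟨d, hd⟩ := exists_Vb_restr_subset (hu.inter (isOpen_Vb hτ)) hg
  obtain ⟨e, he⟩ := (pdom_finite hτ).exists_finset_coe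
  refine ⟨restr g (d ∪ e), restr_mem_SGfin _ _, subset_restr_of_mem_Vb hg.2 ?_,
    hmeagre.mono ?_⟩
  · rw [Finset.coe_union, he]
    exact Set.subset_union_right
  · rintro h ⟨hh, hhD⟩
    have hrestr : restr (g : Sinf) d ⊆ restr g (d ∪ e) :=
      fun p hp => ⟨Finset.mem_union_left _ hp.1, hp.2⟩
    exact ⟨hd (Vb_anti hrestr hh), fun hS => hhD hS.2⟩

variable [BaireSpace G]

lemma vaughtStar_subset_vaughtDelta (hτ : τ ∈ SGfin G) : vaughtStar G τ D ⊆ vaughtDelta G τ D :=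
  fun y hy hΔ => not_isMeagre_of_isOpen (isOpen_Vb hτ) (Vb_nonempty hτ)
    (Set.inter_union_sdiff (Vb G τ) ((fun h : G => h • y) ⁻¹' D) ▸ hΔ.union hy)

lemma vaughtDelta_eq_of_invariant (hτ : τ ∈ SGfin G)
    (hD : ∀ h ∈ Vb G τ, ∀ z, h • z ∈ D ↔ z ∈ D) :
    vaughtDelta G τ D = D := by
  ext y
  by_cases hy : y ∈ D
  · have hfull : Vb G τ ∩ (fun h : G => h • y) ⁻¹' D = Vb G τ :=
      Set.inter_eq_left.2 fun h hh => (hD h hh y).2 hy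
    simpa [vaughtDelta, hfull, hy] using not_isMeagre_of_isOpen (isOpen_Vb hτ) (Vb_nonempty hτ)
  · have hempty : Vb G τ ∩ (fun h : G => h • y) ⁻¹' D = ∅ :=
      Set.eq_empty_iff_forall_notMem.2 fun h hh => hy ((hD h hh.1 y).1 hh.2)
    simp [vaughtDelta, hempty, hy, IsMeagre.empty]

lemma vaughtStar_eq_of_invariant (hτ : τ ∈ SGfin G)
    (hD : ∀ h ∈ Vb G τ, ∀ z, h • z ∈ D ↔ z ∈ D) :
    vaughtStar G τ D = D := by
  rw [vaughtStar_eq_compl_vaughtDelta_compl,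
    vaughtDelta_eq_of_invariant hτ fun h hh z => (hD h hh z).not, compl_compl]

lemma isOpen_vaughtDelta [TopologicalSpace X] [ContinuousSMul G X] (hτ : τ ∈ SGfin G)
    (hD : IsOpen D) :
    IsOpen (vaughtDelta G τ D) := by
  have hΔ : vaughtDelta G τ D = ⋃ u ∈ Vb G τ, (u • ·) ⁻¹' D := by
    ext y
    have hopen : IsOpen (Vb G τ ∩ (fun h : G => h • y) ⁻¹' D) :=
      (isOpen_Vb hτ).inter (hD.preimage (continuous_id.smul continuous_const))
    simp only [Set.mem_iUnion₂, Set.mem_preimage, exists_prop]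
    exact ⟨fun h => nonempty_of_not_isMeagre h, fun h => not_isMeagre_of_isOpen hopen h⟩
  rw [hΔ]
  exact isOpen_biUnion fun u _ => hD.preimage (continuous_const_smul u)

end Vaught

section Minimality

open TopologicalSpace

variable {G : Subgroup Sinf} {X : Type*} [MulAction G X] {A : ℕ → Set X}
  {σ τ : Set (ℕ × ℕ)} {x : X}

lemma BsetOne_subset_of_isOpen [TopologicalSpace X] (hbasis : IsTopologicalBasis (Set.range A))
    {U : Set X} (hU : IsOpen U) (hinv : ∀ v ∈ Vc G (prng σ), ∀ z ∈ U, v • z ∈ U)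
    (hmeet : (setOrb G (Vb G σ) x ∩ U).Nonempty) : BsetOne G A σ x ⊆ U := by
  obtain ⟨z, hzorb, hzU⟩ := hmeet
  obtain ⟨_, ⟨l, rfl⟩, hzl, hlU⟩ := hbasis.exists_subset_of_mem_open hzU hU
  intro y hy
  obtain ⟨v, hv, a, ha, rfl⟩ := Set.mem_iUnion₂.1 (Set.mem_iInter₂.1 hy.1 l ⟨z, hzorb, hzl⟩)
  exact hinv v hv a (hlU ha)

lemma BsetOne_subset_of_isClosed [TopologicalSpace X] (hbasis : IsTopologicalBasis (Set.range A))
    {F : Set X} (hF : IsClosed F) (horb : setOrb G (Vb G σ) x ⊆ F) : BsetOne G A σ x ⊆ F := by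
  intro y hy
  by_contra hyF
  obtain ⟨_, ⟨l, rfl⟩, hyl, hlF⟩ := hbasis.exists_subset_of_mem_open hyF hF.isOpen_compl
  refine Set.mem_iInter₂.1 hy.2 l ?_ (Set.mem_biUnion (x := 1) (fun _ _ => rfl) (by rwa [one_smul]))
  exact Set.eq_empty_iff_forall_notMem.2 fun z hz => hlF hz.2 (horb hz.1)

variable (G A) in
/-- The statement proved by induction on `α`, for `T` one of the Vaught transforms. -/
def AlphaSetMinimal (T : Set (ℕ × ℕ) → Set X → Set X) (x : X) (α : Ordinal.{0}) (D : Set X) :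
    Prop :=
  ∀ σ ∈ SGfin G, ∀ τ ∈ SGfin G, pdom τ ⊆ prng σ →
    setOrb G (Vb G σ) x ⊆ T τ D → Bset G A α σ x ⊆ T τ D

variable [BaireSpace G]

lemma alphaSetMinimal_one_of_isOpen [TopologicalSpace X] [ContinuousSMul G X]
    (hbasis : IsTopologicalBasis (Set.range A)) {D : Set X} (hD : IsOpen D) :
    AlphaSetMinimal G A (vaughtDelta G) x 1 D := by
  intro σ hσ τ hτ hpr horb
  rw [Bset_one]
  refine BsetOne_subset_of_isOpen hbasis (isOpen_vaughtDelta hτ hD) (fun v hv z hz => ?_) ?_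
  · rwa [smul_mem_vaughtDelta_iff, compR_eq_self_of_mem_Vc hv hpr]
  · obtain ⟨g, hg⟩ := Vb_nonempty hσ
    exact ⟨g • x, ⟨g, hg, rfl⟩, horb ⟨g, hg, rfl⟩⟩

lemma alphaSetMinimal_one_of_isClosed [TopologicalSpace X] [ContinuousSMul G X]
    (hbasis : IsTopologicalBasis (Set.range A)) {D : Set X} (hD : IsClosed D) :
    AlphaSetMinimal G A (vaughtStar G) x 1 D := by
  intro σ hσ τ hτ hpr horb
  rw [Bset_one]
  refine BsetOne_subset_of_isClosed hbasis ?_ horb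
  rw [vaughtStar_eq_compl_vaughtDelta_compl]
  exact (isOpen_vaughtDelta hτ hD.isOpen_compl).isClosed_compl

/-- Translating by `g₀` moves the comeagreness found at `g₀ • x` to `x`; the domain half of
`B_{β+1}` supplies an extension `σ'` of `σ` whose whole orbit `V_{σ'}·x` then inherits it. -/
lemma Bset_add_one_subset_vaughtDelta {β : Ordinal.{0}} (hβ : β ≠ 0) {E : Set X}
    (hE : ∀ z : X, BaireMeasurableSet ((fun h : G => h • z) ⁻¹' E))
    (ih : AlphaSetMinimal G A (vaughtStar G) x β E) (hσ : σ ∈ SGfin G) (hτ : τ ∈ SGfin G)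
    (hpr : pdom τ ⊆ prng σ) {g₀ : G} (hg₀ : g₀ ∈ Vb G σ) (hx : g₀ • x ∈ vaughtDelta G τ E) :
    Bset G A (β + 1) σ x ⊆ vaughtDelta G τ E := by
  intro y hy
  obtain ⟨τ₁, hτ₁, hττ₁, hx₁⟩ := exists_mem_vaughtStar_of_mem_vaughtDelta hτ (hE _) hx
  rw [smul_mem_vaughtStar_iff] at hx₁
  set ρ := compR τ₁ g₀
  have hρ : ρ ∈ SGfin G := compR_mem_SGfin hτ₁ g₀.2
  obtain ⟨b, hb⟩ := ((pdom_finite hσ).union (pdom_finite hρ)).exists_finset_coe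
  obtain ⟨σ', hσ', hσσ', hdom, hy'⟩ :=
    exists_of_mem_Bset_add_one_pdom hβ hy (hb ▸ Set.subset_union_left)
  obtain ⟨g₂, hg₂⟩ := Vb_nonempty hσ'
  have hρσ' : pdom ρ ⊆ pdom σ' := hdom ▸ hb ▸ Set.subset_union_right
  have horb : setOrb G (Vb G σ') x ⊆ vaughtStar G (compR ρ ((g₂⁻¹ : G) : Sinf)) E := by
    rintro _ ⟨h, hh, rfl⟩
    rw [smul_mem_vaughtStar_iff, compR_compR]
    change x ∈ vaughtStar G (compR ρ ((g₂⁻¹ * h : G) : Sinf)) E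
    rwa [compR_eq_self_of_mem_Vc (inv_mul_mem_Vc_pdom hg₂ hh) hρσ']
  have hτ₂ := compR_mem_SGfin hρ (g₂⁻¹).2
  exact vaughtDelta_anti (subset_compR_inv hpr hg₀ (Vb_anti hσσ' hg₂) (compR_mono hττ₁ _))
    (vaughtStar_subset_vaughtDelta hτ₂
      (ih σ' hσ' _ hτ₂ (pdom_compR_inv_subset_prng hg₂ hρσ') horb hy'))

lemma alphaSetMinimal_add_one_vaughtStar {β : Ordinal.{0}} (hβ : β ≠ 0) {E : Set X}
    (hE : ∀ z : X, BaireMeasurableSet ((fun h : G => h • z) ⁻¹' E))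
    (ih : AlphaSetMinimal G A (vaughtDelta G) x β E) :
    AlphaSetMinimal G A (vaughtStar G) x (β + 1) E := by
  intro σ hσ τ hτ hpr horb y hy
  rw [vaughtStar_eq_compl_vaughtDelta_compl]
  intro hyΔ
  obtain ⟨τ₁, hτ₁, hττ₁, hy₁⟩ :=
    exists_mem_vaughtStar_of_mem_vaughtDelta (D := Eᶜ) hτ (hE y).compl hyΔ
  obtain ⟨a, ha⟩ := ((prng_finite hσ).union (pdom_finite hτ₁)).exists_finset_coe
  obtain ⟨σ', hσ', hσσ', hrng, hy'⟩ :=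
    exists_of_mem_Bset_add_one_prng hβ hy (ha ▸ Set.subset_union_left)
  have horb' : setOrb G (Vb G σ') x ⊆ vaughtDelta G τ₁ E :=
    (Set.image_mono (Vb_anti hσσ')).trans <| horb.trans <|
      (vaughtStar_mono hττ₁).trans (vaughtStar_subset_vaughtDelta hτ₁)
  rw [vaughtStar_eq_compl_vaughtDelta_compl, compl_compl] at hy₁
  exact hy₁ (ih σ' hσ' τ₁ hτ₁ (hrng ▸ ha ▸ Set.subset_union_right) horb' hy')

end Minimality

section Induction

open TopologicalSpace

variable {G : Subgroup Sinf} {X : Type*} [TopologicalSpace X] [MulAction G X] [ContinuousSMul G X]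
  {A : ℕ → Set X} {x : X}

lemma baireMeasurableSet_preimage_smul {β : Ordinal.{0}} {E : Set X} (hE : E ∈ SigmaB X β)
    (z : X) : BaireMeasurableSet ((fun h : G => h • z) ⁻¹' E) :=
  baireMeasurableSet_preimage_of_mem_SigmaB (continuous_id.smul continuous_const) β E hE

variable [BaireSpace G]

lemma alphaSetMinimal_of_mem_SigmaB {α : Ordinal.{0}} (hα : 1 < α)
    (ih : ∀ β < α, 1 ≤ β → ∀ E ∈ PiB X β, AlphaSetMinimal G A (vaughtStar G) x β E)
    {D : Set X} (hD : D ∈ SigmaB X α) : AlphaSetMinimal G A (vaughtDelta G) x α D := by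
  intro σ hσ τ hτ hpr horb y hy
  obtain ⟨f, hf, rfl⟩ := (mem_SigmaB_of_one_lt hα).1 hD
  obtain ⟨g₀, hg₀⟩ := Vb_nonempty hσ
  have hg₀x := horb ⟨g₀, hg₀, rfl⟩
  rw [vaughtDelta_iUnion] at hg₀x ⊢
  obtain ⟨n, hn⟩ := Set.mem_iUnion.1 hg₀x
  obtain ⟨⟨β, hβα⟩, hβ, hfn⟩ := hf n
  have hE (z : X) : BaireMeasurableSet ((fun h : G => h • z) ⁻¹' f n) := by
    simpa using (baireMeasurableSet_preimage_smul hfn z).compl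
  refine Set.mem_iUnion_of_mem n <| Bset_add_one_subset_vaughtDelta
    (Order.one_le_iff_ne_zero.1 hβ) hE (ih β hβα hβ _ hfn) hσ hτ hpr hg₀ hn ?_
  exact Bset_anti hσ x (hβ.trans (le_self_add)) (Order.add_one_le_of_lt hβα) hy

lemma alphaSetMinimal_of_mem_PiB {α : Ordinal.{0}} (hα : 1 < α)
    (ih : ∀ β < α, 1 ≤ β → ∀ E ∈ SigmaB X β, AlphaSetMinimal G A (vaughtDelta G) x β E)
    {D : Set X} (hD : D ∈ PiB X α) : AlphaSetMinimal G A (vaughtStar G) x α D := by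
  intro σ hσ τ hτ hpr horb
  obtain ⟨f, hf, hDc⟩ := (mem_SigmaB_of_one_lt hα).1 hD
  obtain rfl : D = ⋂ n, (f n)ᶜ := by rw [← Set.compl_iUnion, ← hDc, compl_compl]
  rw [vaughtStar_iInter] at horb ⊢
  refine Set.subset_iInter fun n => ?_
  obtain ⟨⟨β, hβα⟩, hβ, hfn⟩ := hf n
  refine (Bset_anti hσ x (hβ.trans (le_self_add)) (Order.add_one_le_of_lt hβα)).trans ?_
  exact alphaSetMinimal_add_one_vaughtStar (Order.one_le_iff_ne_zero.1 hβ)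
    (baireMeasurableSet_preimage_smul hfn) (ih β hβα hβ _ hfn) σ hσ τ hτ hpr
    (horb.trans (Set.iInter_subset _ n))

theorem alphaSetMinimal_of_mem (hbasis : IsTopologicalBasis (Set.range A)) (x : X)
    {α : Ordinal.{0}} (hα : 1 ≤ α) :
    (∀ D ∈ SigmaB X α, AlphaSetMinimal G A (vaughtDelta G) x α D) ∧
      ∀ D ∈ PiB X α, AlphaSetMinimal G A (vaughtStar G) x α D := by
  induction α using WellFoundedLT.induction with
  | _ α ih =>
    rcases hα.eq_or_lt with rfl | hα
    · refine ⟨fun D hD => alphaSetMinimal_one_of_isOpen hbasis ?_,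
        fun D hD => alphaSetMinimal_one_of_isClosed hbasis ?_⟩
      · rwa [SigmaB_of_le_one le_rfl] at hD
      · rw [← isOpen_compl_iff]
        change Dᶜ ∈ SigmaB X 1 at hD
        rwa [SigmaB_of_le_one le_rfl] at hD
    · exact ⟨fun D => alphaSetMinimal_of_mem_SigmaB hα fun β hβ h1 => (ih β hβ h1).2,
        fun D => alphaSetMinimal_of_mem_PiB hα fun β hβ h1 => (ih β hβ h1).1⟩

end Induction

theorem alphaSet_minimality_general
    (G : Subgroup Sinf) (hGclosed : IsClosed (G : Set Sinf))
    {X : Type*} [TopologicalSpace X] [MulAction G X] [ContinuousSMul G X]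
    (A : ℕ → Set X) (hbasis : TopologicalSpace.IsTopologicalBasis (Set.range A))
    (x : X) (σ : Set (ℕ × ℕ)) (hσ : σ ∈ SGfin G)
    (α : Ordinal.{0}) (hα : 1 ≤ α)
    (B : Set X) (hB : B ∈ SigmaB X α ∪ PiB X α)
    (hBinv : ∀ g ∈ Vc G (prng σ), g • B = B) :
    setOrb G (Vb G σ) x ⊆ B ↔ Bset G A α σ x ⊆ B := by
  have := baireSpace_of_isClosed hGclosed
  set τ := idb (prng σ)
  have hτ : τ ∈ SGfin G := idb_mem_SGfin (prng_finite hσ)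
  have hpr : pdom τ ⊆ prng σ := (pdom_idb _).le
  have hinv : ∀ h ∈ Vb G τ, ∀ z, h • z ∈ B ↔ z ∈ B := by
    rw [Vb_idb]
    intro h hh z
    conv_lhs => rw [← hBinv h hh]
    exact Set.smul_mem_smul_set_iff
  refine ⟨fun horb => ?_, fun hBset => (setOrb_subset_Bset hα σ).trans hBset⟩
  rcases hB with hB | hB
  · rw [← vaughtDelta_eq_of_invariant hτ hinv] at horb ⊢
    exact (alphaSetMinimal_of_mem hbasis x hα).1 B hB σ hσ τ hτ hpr horb
  · rw [← vaughtStar_eq_of_invariant hτ hinv] at horb ⊢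
    exact (alphaSetMinimal_of_mem hbasis x hα).2 B hB σ hσ τ hτ hpr horb

/-- Minimality of α-sets. -/
theorem alphaSet_minimality
    (G : Subgroup Sinf) (hGclosed : IsClosed (G : Set Sinf))
    {X : Type*} [TopologicalSpace X] [PolishSpace X] [MulAction G X] [ContinuousSMul G X]
    (A : ℕ → Set X) (hbasis : TopologicalSpace.IsTopologicalBasis (Set.range A))
    (hbasisInv : ∀ l, ∃ c : Finset ℕ, ∀ g ∈ Vc G (↑c : Set ℕ), g • A l = A l)
    (x : X) (σ : Set (ℕ × ℕ)) (hσ : σ ∈ SGfin G)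
    (α : Ordinal.{0}) (hα : 1 ≤ α) (hαc : α.card ≤ Cardinal.aleph0)
    (B : Set X) (hB : B ∈ SigmaB X α ∪ PiB X α)
    (hBinv : ∀ g ∈ Vc G (prng σ), g • B = B) :
    setOrb G (Vb G σ) x ⊆ B ↔ Bset G A α σ x ⊆ B :=
  alphaSet_minimality_general G hGclosed A hbasis x σ hσ α hα B hB hBinv
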